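/- Let a, b, c ∈ ℝ with b > 0 and b < a < 2b (i.e. 1 < a/b < 2). Then Δ > 0 and the real roots of f₁ are exactly 0, z₁ = c/(2b) − √Δ and z₂ = c/(2b) + √Δ; they are pairwise distinct and satisfy z₁ < 0 < z₂; moreover β₂(0)β₃(0) = (a − b)(2b − a) > 0 while β₂(z₁)β₃(z₁) < 0 and β₂(z₂)β₃(z₂) < 0, i.e. the root 0 is a node lying between two saddle-type roots (Darbouxian type D₂). -/

import Mathlib

noncomputable section

/-- `Δ = (c/(2b))² − a/b + 2`. -/
def disc (a b c : ℝ) : ℝ := (c / (2 * b)) ^ 2 - a / b + 2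

/-- The cubic `f₁(z) = b z³ − c z² + (a − 2b) z`. -/
def cubicF (a b c z : ℝ) : ℝ := b * z ^ 3 - c * z ^ 2 + (a - 2 * b) * z

/-- `β₂(z) = 2b z² − c z + (a − b)`. -/
def beta2 (a b c z : ℝ) : ℝ := 2 * b * z ^ 2 - c * z + (a - b)

/-- `β₃(z) = −3b z² + 2c z + (2b − a)`. -/
def beta3 (a b c z : ℝ) : ℝ := -3 * b * z ^ 2 + 2 * c * z + (2 * b - a)

/-!
Proof idea: `f₁(z) = z q(z)` with `q(z) = b z² − c z + (a − 2b)`, whose roots are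
`c/(2b) ± √Δ`; their product `a/b − 2` is negative, so they lie on either side of `0`.
Modulo `q`, `β₂ ≡ b(z² + 1) > 0` and `β₃ ≡ a − 2b − b z² < 0`, so every nonzero root is a
saddle, while at `0` the product is `(a − b)(2b − a) > 0`.
-/

def quadF (a b c z : ℝ) : ℝ := b * z ^ 2 - c * z + (a - 2 * b)

lemma cubicF_eq_mul_quadF (a b c z : ℝ) : cubicF a b c z = z * quadF a b c z := by
  unfold cubicF quadF; ring

lemma beta2_eq_quadF_add (a b c z : ℝ) : beta2 a b c z = quadF a b c z + b * (z ^ 2 + 1) := by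
  unfold beta2 quadF; ring

lemma beta3_eq_quadF_add (a b c z : ℝ) :
    beta3 a b c z = -2 * quadF a b c z + (a - 2 * b - b * z ^ 2) := by
  unfold beta3 quadF; ring

lemma disc_pos {a b : ℝ} (c : ℝ) (hb : 0 < b) (hab : a < 2 * b) : 0 < disc a b c := by
  have : a / b < 2 := (div_lt_iff₀ hb).mpr (by linarith)
  unfold disc
  nlinarith [sq_nonneg (c / (2 * b))]

section Roots

variable {a b c : ℝ}

lemma quadF_eq_mul_sub_mul_sub (hb : b ≠ 0) (hd : 0 ≤ disc a b c) (z : ℝ) :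
    quadF a b c z =
      b * (z - (c / (2 * b) - √(disc a b c))) * (z - (c / (2 * b) + √(disc a b c))) := by
  have hs : √(disc a b c) ^ 2 = (c / (2 * b)) ^ 2 - a / b + 2 := Real.sq_sqrt hd
  have hm : 2 * b * (c / (2 * b)) = c := by field_simp
  have ha : b * (a / b) = a := by field_simp
  unfold quadF
  linear_combination b * hs + z * hm - ha

lemma quadF_eq_zero_iff (hb : b ≠ 0) (hd : 0 ≤ disc a b c) {z : ℝ} :
    quadF a b c z = 0 ↔ z = c / (2 * b) - √(disc a b c) ∨ z = c / (2 * b) + √(disc a b c) := by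
  rw [quadF_eq_mul_sub_mul_sub hb hd, mul_eq_zero, mul_eq_zero, sub_eq_zero, sub_eq_zero]
  simp [hb]

lemma setOf_cubicF_eq_zero (hb : b ≠ 0) (hd : 0 ≤ disc a b c) :
    {z : ℝ | cubicF a b c z = 0} =
      {0, c / (2 * b) - √(disc a b c), c / (2 * b) + √(disc a b c)} := by
  ext z
  simp only [Set.mem_ofPred_eq, Set.mem_insert_iff, Set.mem_singleton_iff,
    cubicF_eq_mul_quadF, mul_eq_zero, quadF_eq_zero_iff hb hd]

lemma sub_sqrt_disc_mul_add_sqrt_disc (hd : 0 ≤ disc a b c) :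
    (c / (2 * b) - √(disc a b c)) * (c / (2 * b) + √(disc a b c)) = a / b - 2 := by
  have hs : √(disc a b c) ^ 2 = (c / (2 * b)) ^ 2 - a / b + 2 := Real.sq_sqrt hd
  linear_combination -hs

lemma sub_sqrt_disc_neg_and_add_sqrt_disc_pos (hb : 0 < b) (hab : a < 2 * b) :
    c / (2 * b) - √(disc a b c) < 0 ∧ 0 < c / (2 * b) + √(disc a b c) := by
  have hd := disc_pos c hb hab
  have hs : 0 < √(disc a b c) := Real.sqrt_pos.mpr hd
  have hprod : (c / (2 * b) - √(disc a b c)) * (c / (2 * b) + √(disc a b c)) < 0 := by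
    rw [sub_sqrt_disc_mul_add_sqrt_disc hd.le, sub_neg, div_lt_iff₀ hb]
    linarith
  rcases mul_neg_iff.mp hprod with ⟨h₁, h₂⟩ | h
  · linarith
  · exact h

lemma beta2_mul_beta3_neg_of_quadF_eq_zero (hb : 0 < b) (hab : a < 2 * b) {z : ℝ}
    (hz : quadF a b c z = 0) : beta2 a b c z * beta3 a b c z < 0 := by
  rw [beta2_eq_quadF_add, beta3_eq_quadF_add, hz]
  apply mul_neg_of_pos_of_neg
  · positivity
  · nlinarith [sq_nonneg z]

end Roots

theorem stmt1 (a b c : ℝ) (hb : 0 < b) (hba : b < a) (hab : a < 2 * b) :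
    0 < disc a b c ∧
    ({z : ℝ | cubicF a b c z = 0} =
      {0, c / (2 * b) - Real.sqrt (disc a b c), c / (2 * b) + Real.sqrt (disc a b c)}) ∧
    (c / (2 * b) - Real.sqrt (disc a b c) ≠ 0 ∧
      c / (2 * b) + Real.sqrt (disc a b c) ≠ 0 ∧
      c / (2 * b) - Real.sqrt (disc a b c) ≠ c / (2 * b) + Real.sqrt (disc a b c)) ∧
    (c / (2 * b) - Real.sqrt (disc a b c) < 0 ∧
      0 < c / (2 * b) + Real.sqrt (disc a b c)) ∧
    beta2 a b c 0 * beta3 a b c 0 = (a - b) * (2 * b - a) ∧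
    0 < (a - b) * (2 * b - a) ∧
    beta2 a b c (c / (2 * b) - Real.sqrt (disc a b c)) *
      beta3 a b c (c / (2 * b) - Real.sqrt (disc a b c)) < 0 ∧
    beta2 a b c (c / (2 * b) + Real.sqrt (disc a b c)) *
      beta3 a b c (c / (2 * b) + Real.sqrt (disc a b c)) < 0 := by
  have hd := disc_pos c hb hab
  obtain ⟨hz₁, hz₂⟩ := sub_sqrt_disc_neg_and_add_sqrt_disc_pos (c := c) hb hab
  have hroots := fun z ↦ (quadF_eq_zero_iff (c := c) hb.ne' hd.le (z := z)).mpr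
  refine ⟨hd, setOf_cubicF_eq_zero hb.ne' hd.le, ⟨hz₁.ne, hz₂.ne', by linarith⟩, ⟨hz₁, hz₂⟩,
    by simp [beta2, beta3], mul_pos (by linarith) (by linarith),
    beta2_mul_beta3_neg_of_quadF_eq_zero hb hab (hroots _ (Or.inl rfl)),
    beta2_mul_beta3_neg_of_quadF_eq_zero hb hab (hroots _ (Or.inr rfl))⟩
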